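/- Let 𝒜 be an algebra of subsets of 𝔾 and let μ : 𝒜 → [0,∞) be a content (μ(∅) = 0, μ finitely additive on disjoint sets) with μ(𝔾) = 1 such that: (i) for every prime p and every M ⊆ 𝒫 one has π_p⁻¹(M) ∈ 𝒜, and (ii) for any finitely many distinct primes p₁,…,p_k and sets M₁,…,M_k ⊆ 𝒫, μ(⋂_{i=1}^k π_{p_i}⁻¹(M_i)) = ∏_{i=1}^k P_{p_i}(M_i). For G ∈ 𝔾 define exp(G) := ∏_p p^{m(G_p)}, where m(λ) is the largest part of the partition λ (with m(0) = 0). Then for every n ≥ 1, if T_n := {G ∈ 𝔾 : exp(G) = n} belongs to 𝒜, then μ(T_n) = 0. Consequently, if all T_n belong to 𝒜, then 𝔾 is a countable disjoint union of μ-null sets of 𝒜, so μ is not countably additive. -/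

import Mathlib

open Filter Topology

/-- The type of all integer partitions (of all natural numbers `n`). -/
def PartitionsAll : Type := Σ n : ℕ, Nat.Partition n

/-- The empty partition of `0`. -/
def partZero : PartitionsAll := ⟨0, ⟨0, by simp, rfl⟩⟩

/-- The unique partition of `1`. -/
def partOne : PartitionsAll :=
  ⟨1, ⟨{1}, by intro i hi; rw [Multiset.mem_singleton] at hi; omega, rfl⟩⟩

instance : Zero PartitionsAll := ⟨partZero⟩

/-- The set of isomorphism classes of finite abelian groups, identified with the
finitely supported families of partitions indexed by the primes. -/
abbrev GG : Type := Nat.Primes →₀ PartitionsAll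

/-- The finite abelian `p`-group `⊕ⱼ ℤ/p^{λ_j}ℤ` corresponding to a partition `λ`. -/
abbrev pGroup (p : ℕ) (lam : PartitionsAll) : Type :=
  ∀ i : Fin lam.2.parts.toList.length, ZMod (p ^ lam.2.parts.toList.get i)

/-- The Cohen–Lenstra weight `w_p(λ) = 1/#Aut(G_{p,λ})`. -/
noncomputable def wCL (p : ℕ) (lam : PartitionsAll) : ℝ :=
  ((Nat.card (AddAut (pGroup p lam)) : ℝ))⁻¹

/-- `∏_{i=1}^∞ (1 - p^{-i})`. -/
noncomputable def clC (p : ℕ) : ℝ := ∏' i : ℕ, (1 - ((p : ℝ))⁻¹ ^ (i + 1))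

/-- The local Cohen–Lenstra probability `P_p(S) = (∑_{λ∈S} w_p(λ)) ∏_{i≥1}(1-p^{-i})`. -/
noncomputable def Pp (p : ℕ) (S : Set PartitionsAll) : ℝ :=
  (∑' lam : S, wCL p lam) * clC p

/-- The primes `≤ x`. -/
def primesUpTo (x : ℕ) : Finset ℕ := Nat.primesBelow (x + 1)

/-- The partial products `∏_{p ≤ x} P_p(S)`. -/
noncomputable def globPartial (S : Set PartitionsAll) (x : ℕ) : ℝ :=
  ∏ p ∈ primesUpTo x, Pp p S

/-- The global value `lim_{x→∞} ∏_{p ≤ x} P_p(S)` (the limit exists since all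
factors lie in `[0,1]`). -/
noncomputable def glob (S : Set PartitionsAll) : ℝ :=
  limUnder atTop (globPartial S)

/-- `O(S) = {G : G_p ∈ S for all primes p}`. -/
def Oset (S : Set PartitionsAll) : Set GG := {G : GG | ∀ p : Nat.Primes, G p ∈ S}

/-- `O(E₁, …, E_r) = O(E₁) ∪ … ∪ O(E_r)`. -/
def OOset {r : ℕ} (E : Fin r → Set PartitionsAll) : Set GG := ⋃ i, Oset (E i)

/-- Inclusion–exclusion value of `O(E₁, …, E_r)`. -/
noncomputable def PO {r : ℕ} (E : Fin r → Set PartitionsAll) : ℝ :=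
  ∑ T ∈ Finset.univ.filter (fun T : Finset (Fin r) => T.Nonempty),
    (-1 : ℝ) ^ (T.card + 1) * glob (⋂ i ∈ T, E i)

/-- The collection `𝔇` of sets `D(E₁,…,E_r;F₁,…,F_s)`. -/
def DD : Set (Set GG) :=
  {A | ∃ (r s : ℕ) (E : Fin r → Set PartitionsAll) (F : Fin s → Set PartitionsAll),
      OOset F ⊆ OOset E ∧ A = OOset E \ OOset F}

/-- The value `P(D)` of a set `D ∈ 𝔇` (well-defined: it depends only on the set `D`). -/
noncomputable def PDval (A : Set GG) : ℝ :=
  sSup {x : ℝ | ∃ (r s : ℕ) (E : Fin r → Set PartitionsAll) (F : Fin s → Set PartitionsAll),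
      OOset F ⊆ OOset E ∧ A = OOset E \ OOset F ∧ x = PO E - PO F}

/-- The outer measure `ν`. -/
noncomputable def nuCL (A : Set GG) : ℝ :=
  sInf {x : ℝ | ∃ C : ℕ → Set GG, (∀ i, C i ∈ DD) ∧ A ⊆ ⋃ i, C i ∧ x = ∑' i, PDval (C i)}

/-- The order of a finite abelian group. -/
def ordG (G : GG) : ℕ := G.prod fun p lam => (p : ℕ) ^ lam.1

/-- The exponent of a finite abelian group. -/
def expG (G : GG) : ℕ := G.prod fun p lam => (p : ℕ) ^ lam.2.parts.sup

/-!
A group of exponent `n` has trivial `p`-part for every prime `p ∤ n`, so `T_n` lies in the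
cylinder `⋂_{p ∈ I} π_p⁻¹{0}` for every finite set `I` of such primes, whose content is
`∏_{p ∈ I} P_p({0})`. Compatibility with the `P_p` forces `P_p(𝒫) = 1`, so
`P_p({0}) = (∑_λ w_p(λ))⁻¹`. The partitions `0` and `1` alone contribute `1 + 1/p` to that
sum, so `P_p({0}) ≤ 1 - 1/(p+1)`, and as `∑_p 1/(p+1)` diverges even after removing the finitely
many primes dividing `n`, these products get arbitrarily small.
-/

open Set Function

section Content

variable {α : Type*} {A : Set (Set α)} {μ : Set α → ℝ}

theorem inter_mem_of_compl_mem_of_union_mem (hcompl : ∀ s ∈ A, sᶜ ∈ A)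
    (hunion : ∀ s ∈ A, ∀ t ∈ A, s ∪ t ∈ A) {s t : Set α} (hs : s ∈ A) (ht : t ∈ A) :
    s ∩ t ∈ A := by
  rw [← compl_compl (s ∩ t), compl_inter]
  exact hcompl _ (hunion _ (hcompl s hs) _ (hcompl t ht))

theorem biInter_finset_mem_of_inter_mem {ι : Type*} (huniv : univ ∈ A)
    (hinter : ∀ s ∈ A, ∀ t ∈ A, s ∩ t ∈ A) (I : Finset ι) {s : ι → Set α}
    (hs : ∀ i, s i ∈ A) : ⋂ i ∈ I, s i ∈ A := by
  classical
  induction I using Finset.induction_on with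
  | empty => simpa using huniv
  | insert i I _ ih =>
    rw [Finset.set_biInter_insert]
    exact hinter _ (hs i) _ ih

theorem content_mono (hcompl : ∀ s ∈ A, sᶜ ∈ A) (hunion : ∀ s ∈ A, ∀ t ∈ A, s ∪ t ∈ A)
    (hnonneg : ∀ s ∈ A, 0 ≤ μ s)
    (hadd : ∀ s ∈ A, ∀ t ∈ A, Disjoint s t → μ (s ∪ t) = μ s + μ t)
    {s t : Set α} (hs : s ∈ A) (ht : t ∈ A) (hst : s ⊆ t) : μ s ≤ μ t := by
  have hts : t \ s ∈ A := inter_mem_of_compl_mem_of_union_mem hcompl hunion ht (hcompl s hs)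
  have h := hadd s hs (t \ s) hts disjoint_sdiff_self_right
  rw [union_sdiff_cancel hst] at h
  linarith [hnonneg _ hts]

theorem not_countably_additive_of_iUnion_null (huniv : univ ∈ A) (htotal : μ univ = 1)
    (C : ℕ → Set α) (hC : ∀ i, C i ∈ A) (hdisj : Pairwise (Disjoint on C))
    (hcover : ⋃ i, C i = univ) (hnull : ∀ i, μ (C i) = 0) :
    ¬ ∀ C : ℕ → Set α, (∀ i, C i ∈ A) → (⋃ i, C i) ∈ A → Pairwise (Disjoint on C) →
      HasSum (fun i => μ (C i)) (μ (⋃ i, C i)) := by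
  intro hσ
  have h := hσ C hC (hcover ▸ huniv) hdisj
  simp only [hnull, hcover, htotal] at h
  exact one_ne_zero (h.unique hasSum_zero)

end Content

theorem exists_finset_prod_one_sub_lt {ι : Type*} {f : ι → ℝ} (hf0 : ∀ i, 0 ≤ f i)
    (hf1 : ∀ i, f i ≤ 1) (hf : ¬ Summable f) {ε : ℝ} (hε : 0 < ε) :
    ∃ I : Finset ι, ∏ i ∈ I, (1 - f i) < ε := by
  obtain ⟨I, hI⟩ : ∃ I : Finset ι, -Real.log ε < ∑ i ∈ I, f i := by
    by_contra! h
    exact hf (summable_of_sum_le hf0 h)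
  refine ⟨I, ?_⟩
  calc ∏ i ∈ I, (1 - f i)
      ≤ ∏ i ∈ I, Real.exp (-f i) :=
        Finset.prod_le_prod (fun i _ => by linarith [hf1 i]) fun i _ => by
          linarith [Real.add_one_le_exp (-f i)]
    _ = Real.exp (-∑ i ∈ I, f i) := by rw [← Real.exp_sum, Finset.sum_neg_distrib]
    _ < Real.exp (Real.log ε) := Real.exp_lt_exp.mpr (by linarith)
    _ = ε := Real.exp_log hε

theorem Nat.Primes.not_summable_one_div_add_one :
    ¬ Summable (fun p : Nat.Primes => 1 / (((p : ℕ) : ℝ) + 1)) := by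
  intro hs
  refine Nat.Primes.not_summable_one_div
    ((hs.mul_left 2).of_nonneg_of_le (fun p => by positivity) fun p => ?_)
  have hp : (2 : ℝ) ≤ (p : ℕ) := by exact_mod_cast p.2.two_le
  rw [mul_one_div, div_le_div_iff₀ (by linarith) (by linarith)]
  linarith

theorem exists_primes_not_dvd_prod_lt {n : ℕ} (hn : n ≠ 0) {ε : ℝ} (hε : 0 < ε) :
    ∃ I : Finset Nat.Primes, (∀ p ∈ I, ¬ (p : ℕ) ∣ n) ∧
      ∏ p ∈ I, (1 - 1 / (((p : ℕ) : ℝ) + 1)) < ε := by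
  set D : Finset Nat.Primes := n.primeFactors.subtype Nat.Prime
  obtain ⟨I, hI⟩ := exists_finset_prod_one_sub_lt
    (f := fun p : {p // p ∉ D} => 1 / ((((p : Nat.Primes) : ℕ) : ℝ) + 1))
    (fun _ => by positivity) (fun _ => div_le_one_of_le₀ (by simp) (by positivity))
    ((D.summable_compl_iff).not.mpr Nat.Primes.not_summable_one_div_add_one) hε
  refine ⟨I.map (Function.Embedding.subtype _), fun p hp hdvd => ?_, by rwa [Finset.prod_map]⟩
  obtain ⟨⟨q, hqD⟩, -, rfl⟩ := Finset.mem_map.mp hp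
  exact hqD (Finset.mem_subtype.mpr (Nat.mem_primeFactors.mpr ⟨q.2, hdvd, hn⟩))

theorem PartitionsAll.eq_zero_of_sup_parts_eq_zero {lam : PartitionsAll}
    (h : lam.2.parts.sup = 0) : lam = 0 := by
  obtain ⟨m, P⟩ := lam
  have hparts : P.parts = 0 := Multiset.eq_zero_of_forall_notMem fun a ha =>
    (P.parts_pos ha).ne' (Nat.le_zero.mp (h ▸ Multiset.le_sup ha))
  obtain rfl : m = 0 := by rw [← P.parts_sum, hparts, Multiset.sum_zero]
  exact congrArg (Sigma.mk 0) (Subsingleton.elim _ _)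

theorem expG_pos (G : GG) : 0 < expG G :=
  Finset.prod_pos fun q _ => pow_pos q.2.pos _

theorem dvd_expG_of_ne_zero {G : GG} {p : Nat.Primes} (h : G p ≠ 0) : (p : ℕ) ∣ expG G :=
  (dvd_pow_self _ fun h0 => h (PartitionsAll.eq_zero_of_sup_parts_eq_zero h0)).trans
    (Finset.dvd_prod_of_mem (fun q : Nat.Primes => (q : ℕ) ^ (G q).2.parts.sup)
      (Finsupp.mem_support_iff.mpr h))

theorem setOf_expG_eq_subset {n : ℕ} {I : Finset Nat.Primes} (hI : ∀ p ∈ I, ¬ (p : ℕ) ∣ n) :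
    {G : GG | expG G = n} ⊆ ⋂ p ∈ I, (fun G : GG => G p) ⁻¹' {0} := by
  intro G hG
  simp only [mem_iInter, mem_preimage, mem_singleton_iff]
  intro p hp
  by_contra h0
  exact hI p hp (hG ▸ dvd_expG_of_ne_zero h0)

theorem pairwise_disjoint_setOf_expG_eq :
    Pairwise (Disjoint on fun n : ℕ => {G : GG | expG G = n + 1}) :=
  fun _ _ hmn => disjoint_left.mpr fun _ h₁ h₂ => hmn (by simp_all)

theorem iUnion_setOf_expG_eq : ⋃ n : ℕ, {G : GG | expG G = n + 1} = univ :=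
  eq_univ_of_forall fun G => mem_iUnion.mpr ⟨expG G - 1, by simp [Nat.sub_add_cancel (expG_pos G)]⟩

theorem wCL_nonneg (p : ℕ) (lam : PartitionsAll) : 0 ≤ wCL p lam := by
  unfold wCL; positivity

theorem wCL_zero (p : ℕ) : wCL p 0 = 1 := by
  have : IsEmpty (Fin (0 : PartitionsAll).2.parts.toList.length) := by
    rw [show (0 : PartitionsAll).2.parts = 0 from rfl, Multiset.toList_zero, List.length_nil]
    infer_instance
  simp [wCL]

theorem AddAut.card_le_of_forall_eq_zsmul {X : Type*} [AddGroup X] [Finite X] (x₀ : X)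
    (h : ∀ y : X, ∃ k : ℤ, y = k • x₀) : Nat.card (AddAut X) ≤ Nat.card X :=
  Nat.card_le_card_of_injective (fun φ : AddAut X => φ x₀) fun φ ψ hφψ =>
    AddEquiv.ext fun y => by
      obtain ⟨k, rfl⟩ := h y
      simp only [map_zsmul] at hφψ ⊢
      rw [hφψ]

theorem inv_le_wCL_partOne {p : ℕ} (hp : p.Prime) : (p : ℝ)⁻¹ ≤ wCL p partOne := by
  have hlen : partOne.2.parts.toList.length = 1 := by rw [Multiset.length_toList]; rfl
  have hget : ∀ i, partOne.2.parts.toList.get i = 1 := fun i =>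
    Multiset.mem_singleton.mp (Multiset.mem_toList.mp (List.get_mem _ i))
  have hcard : Nat.card (pGroup p partOne) = p := by
    simp only [Nat.card_pi, Nat.card_zmod, hget, pow_one, Finset.prod_const, Finset.card_univ,
      Fintype.card_fin, hlen]
  have : Finite (pGroup p partOne) := Nat.finite_of_card_ne_zero (by rw [hcard]; exact hp.ne_zero)
  have hgen : ∀ y : pGroup p partOne, ∃ k : ℤ, y = k • fun _ => 1 := by
    intro y
    refine ⟨(y ⟨0, by omega⟩).cast, funext fun i => ?_⟩
    obtain rfl : i = ⟨0, by omega⟩ := Fin.ext (by have := i.2; omega)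
    simp
  unfold wCL
  exact inv_anti₀ (by exact_mod_cast Nat.card_pos)
    (by exact_mod_cast hcard ▸ AddAut.card_le_of_forall_eq_zsmul _ hgen)

theorem zero_ne_partOne : (0 : PartitionsAll) ≠ partOne :=
  fun h => zero_ne_one (congrArg Sigma.fst h)

theorem Pp_nonneg (p : ℕ) (S : Set PartitionsAll) : 0 ≤ Pp p S :=
  mul_nonneg (tsum_nonneg fun _ => wCL_nonneg _ _)
    (tprod_nonneg fun _ => sub_nonneg.mpr (pow_le_one₀ (by positivity) (Nat.cast_inv_le_one p)))

theorem Pp_singleton_zero_eq_inv_tsum {p : ℕ} (h : Pp p univ = 1) :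
    Pp p {0} = (∑' lam, wCL p lam)⁻¹ := by
  rw [Pp, tsum_univ] at h
  rw [Pp, tsum_singleton, wCL_zero, one_mul, eq_inv_of_mul_eq_one_right h]

theorem one_add_inv_le_tsum_wCL {p : ℕ} (hp : p.Prime) (h : Pp p univ = 1) :
    1 + (p : ℝ)⁻¹ ≤ ∑' lam, wCL p lam := by
  classical
  rw [Pp, tsum_univ] at h
  -- a non-summable family has `∑' = 0`, which `h` rules out
  have hsumm : Summable (wCL p) := by
    by_contra hns
    rw [tsum_eq_zero_of_not_summable hns, zero_mul] at h
    exact zero_ne_one h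
  calc 1 + (p : ℝ)⁻¹ ≤ wCL p 0 + wCL p partOne := by
        rw [wCL_zero]; gcongr; exact inv_le_wCL_partOne hp
    _ = ∑ lam ∈ {0, partOne}, wCL p lam := (Finset.sum_pair zero_ne_partOne).symm
    _ ≤ ∑' lam, wCL p lam := hsumm.sum_le_tsum _ fun lam _ => wCL_nonneg p lam

theorem Pp_singleton_zero_le {p : ℕ} (hp : p.Prime) (h : Pp p univ = 1) :
    Pp p {0} ≤ 1 - 1 / ((p : ℝ) + 1) := by
  have hp0 : (0 : ℝ) < p := by exact_mod_cast hp.pos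
  calc Pp p {0} = (∑' lam, wCL p lam)⁻¹ := Pp_singleton_zero_eq_inv_tsum h
    _ ≤ (1 + (p : ℝ)⁻¹)⁻¹ := inv_anti₀ (by positivity) (one_add_inv_le_tsum_wCL hp h)
    _ = 1 - 1 / ((p : ℝ) + 1) := by field_simp; ring

theorem exponent_null_content_general
    (A : Set (Set GG)) (μ : Set GG → ℝ)
    (hempty : ∅ ∈ A)
    (hcompl : ∀ s ∈ A, sᶜ ∈ A)
    (hunion : ∀ s ∈ A, ∀ t ∈ A, s ∪ t ∈ A)
    (hnonneg : ∀ s ∈ A, 0 ≤ μ s)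
    (hadd : ∀ s ∈ A, ∀ t ∈ A, Disjoint s t → μ (s ∪ t) = μ s + μ t)
    (htotal : μ Set.univ = 1)
    (hproj : ∀ (p : Nat.Primes) (M : Set PartitionsAll), (fun G : GG => G p) ⁻¹' M ∈ A)
    (hindep : ∀ (I : Finset Nat.Primes) (M : Nat.Primes → Set PartitionsAll),
      μ (⋂ p ∈ I, (fun G : GG => G p) ⁻¹' (M p)) = ∏ p ∈ I, Pp (p : ℕ) (M p)) :
    (∀ n : ℕ, 1 ≤ n → {G : GG | expG G = n} ∈ A → μ {G : GG | expG G = n} = 0) ∧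
      ((∀ n : ℕ, 1 ≤ n → {G : GG | expG G = n} ∈ A) →
        (Pairwise (Function.onFun Disjoint fun n : ℕ => {G : GG | expG G = n + 1})) ∧
        (⋃ n : ℕ, {G : GG | expG G = n + 1}) = Set.univ ∧
        (∀ n : ℕ, μ {G : GG | expG G = n + 1} = 0) ∧
        ¬ (∀ (C : ℕ → Set GG), (∀ i, C i ∈ A) → (⋃ i, C i) ∈ A →
            Pairwise (Function.onFun Disjoint C) →
            HasSum (fun i => μ (C i)) (μ (⋃ i, C i)))) := by
  have huniv : univ ∈ A := compl_empty ▸ hcompl ∅ hempty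
  have hPp_univ (p : Nat.Primes) : Pp p univ = 1 := by
    simpa [htotal] using (hindep {p} fun _ => univ).symm
  have hnull (n : ℕ) (hn : n ≠ 0) (hT : {G : GG | expG G = n} ∈ A) :
      μ {G : GG | expG G = n} = 0 := by
    refine le_antisymm (le_of_forall_pos_lt_add fun ε hε => ?_) (hnonneg _ hT)
    obtain ⟨I, hIn, hIε⟩ := exists_primes_not_dvd_prod_lt hn hε
    have hcyl : ⋂ p ∈ I, (fun G : GG => G p) ⁻¹' {0} ∈ A :=
      biInter_finset_mem_of_inter_mem huniv
        (fun _ hs _ ht => inter_mem_of_compl_mem_of_union_mem hcompl hunion hs ht) I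
        fun p => hproj p _
    calc μ {G : GG | expG G = n}
        ≤ μ (⋂ p ∈ I, (fun G : GG => G p) ⁻¹' {0}) :=
          content_mono hcompl hunion hnonneg hadd hT hcyl (setOf_expG_eq_subset hIn)
      _ = ∏ p ∈ I, Pp p {0} := hindep I _
      _ ≤ ∏ p ∈ I, (1 - 1 / (((p : ℕ) : ℝ) + 1)) :=
          Finset.prod_le_prod (fun p _ => Pp_nonneg _ _)
            fun p _ => Pp_singleton_zero_le p.2 (hPp_univ p)
      _ < 0 + ε := by rwa [zero_add]
  refine ⟨fun n hn => hnull n (by omega), fun hall => ?_⟩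
  have hT (n : ℕ) := hall (n + 1) n.succ_pos
  have hnull' (n : ℕ) := hnull (n + 1) n.succ_ne_zero (hT n)
  exact ⟨pairwise_disjoint_setOf_expG_eq, iUnion_setOf_expG_eq, hnull',
    not_countably_additive_of_iUnion_null huniv htotal _ hT pairwise_disjoint_setOf_expG_eq
      iUnion_setOf_expG_eq hnull'⟩

/-- For any content `μ` on an algebra `𝒜` of subsets of `𝔾` compatible with the
local Cohen–Lenstra probabilities, the set `T_n = {G : exp(G) = n}` has content `0`
whenever it is in `𝒜`; consequently, if all `T_n` are in `𝒜`, then `𝔾` is a countable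
disjoint union of `μ`-null sets of `𝒜`, so `μ` is not countably additive. -/
theorem exponent_null_content
    (A : Set (Set GG)) (μ : Set GG → ℝ)
    (hempty : ∅ ∈ A)
    (hcompl : ∀ s ∈ A, sᶜ ∈ A)
    (hunion : ∀ s ∈ A, ∀ t ∈ A, s ∪ t ∈ A)
    (hμempty : μ ∅ = 0)
    (hnonneg : ∀ s ∈ A, 0 ≤ μ s)
    (hadd : ∀ s ∈ A, ∀ t ∈ A, Disjoint s t → μ (s ∪ t) = μ s + μ t)
    (htotal : μ Set.univ = 1)
    (hproj : ∀ (p : Nat.Primes) (M : Set PartitionsAll), (fun G : GG => G p) ⁻¹' M ∈ A)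
    (hindep : ∀ (I : Finset Nat.Primes) (M : Nat.Primes → Set PartitionsAll),
      μ (⋂ p ∈ I, (fun G : GG => G p) ⁻¹' (M p)) = ∏ p ∈ I, Pp (p : ℕ) (M p)) :
    (∀ n : ℕ, 1 ≤ n → {G : GG | expG G = n} ∈ A → μ {G : GG | expG G = n} = 0) ∧
      ((∀ n : ℕ, 1 ≤ n → {G : GG | expG G = n} ∈ A) →
        (Pairwise (Function.onFun Disjoint fun n : ℕ => {G : GG | expG G = n + 1})) ∧
        (⋃ n : ℕ, {G : GG | expG G = n + 1}) = Set.univ ∧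
        (∀ n : ℕ, μ {G : GG | expG G = n + 1} = 0) ∧
        ¬ (∀ (C : ℕ → Set GG), (∀ i, C i ∈ A) → (⋃ i, C i) ∈ A →
            Pairwise (Function.onFun Disjoint C) →
            HasSum (fun i => μ (C i)) (μ (⋃ i, C i)))) :=
  exponent_null_content_general A μ hempty hcompl hunion hnonneg hadd htotal hproj hindep
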